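/- Equi-satisfiable box-elimination for Krom clauses: let φ = φ₀ ∧ ∇(□_α λ ∨ μ) be a Krom formula over alphabet P, where λ is a positive literal and μ a literal, and let p ∉ P be fresh. Define φ' = φ₀ ∧ ∇(¬◇_α p ∨ μ) ∧ ∇□_α(p ∨ λ). Then for every model M over P and world w: M,w ⊩ φ iff there exists an extension M' of M to P ∪ {p} with M',w ⊩ φ'. -/

import Mathlib

/-- A Kripke model: accessibility relations indexed by `ι`, valuation over letters `P`. -/
structure KModel (ι P W : Type) where
  rel : ι → W → W → Prop
  val : W → P → Prop

/-- General positive literals: `⊤ | p | ◇_a λ | □_a λ`. -/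
inductive PLit (ι P : Type) : Type
  | top : PLit ι P
  | atom : P → PLit ι P
  | dia : ι → PLit ι P → PLit ι P
  | box : ι → PLit ι P → PLit ι P

/-- Positive box-literals: `⊤ | p | □_a λ`. -/
inductive BLit (ι P : Type) : Type
  | top : BLit ι P
  | atom : P → BLit ι P
  | box : ι → BLit ι P → BLit ι P

/-- Positive diamond-literals: `⊤ | p | ◇_a λ`. -/
inductive DLit (ι P : Type) : Type
  | top : DLit ι P
  | atom : P → DLit ι P
  | dia : ι → DLit ι P → DLit ι P

def PLit.sat {ι P W : Type} (M : KModel ι P W) : W → PLit ι P → Prop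
  | _, .top => True
  | w, .atom p => M.val w p
  | w, .dia a l => ∃ v, M.rel a w v ∧ PLit.sat M v l
  | w, .box a l => ∀ v, M.rel a w v → PLit.sat M v l

def BLit.sat {ι P W : Type} (M : KModel ι P W) : W → BLit ι P → Prop
  | _, .top => True
  | w, .atom p => M.val w p
  | w, .box a l => ∀ v, M.rel a w v → BLit.sat M v l

def DLit.sat {ι P W : Type} (M : KModel ι P W) : W → DLit ι P → Prop
  | _, .top => True
  | w, .atom p => M.val w p
  | w, .dia a l => ∃ v, M.rel a w v ∧ DLit.sat M v l

/-- Satisfaction of a property behind a prefix `∇` of universal modalities. -/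
def nablaSat {ι P W : Type} (M : KModel ι P W) : List ι → W → (W → Prop) → Prop
  | [], w, Φ => Φ w
  | a :: rest, w, Φ => ∀ v, M.rel a w v → nablaSat M rest v Φ

/-- A Horn clause `∇(λ₁ ∧ … ∧ λₙ → μ)` with general positive literals;
`concl = none` encodes the consequent `⊥`. -/
structure HornClause (ι P : Type) where
  nabla : List ι
  ante : List (PLit ι P)
  concl : Option (PLit ι P)

def HornClause.sat {ι P W : Type} (M : KModel ι P W) (w : W) (c : HornClause ι P) : Prop :=
  nablaSat M c.nabla w fun v =>
    (∀ l ∈ c.ante, PLit.sat M v l) → c.concl.elim False fun l => PLit.sat M v l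

def hornSat {ι P W : Type} (M : KModel ι P W) (w : W) (φ : List (HornClause ι P)) : Prop :=
  ∀ c ∈ φ, c.sat M w

/-- A Horn-box clause: positive literals use boxes only. -/
structure HornBoxClause (ι P : Type) where
  nabla : List ι
  ante : List (BLit ι P)
  concl : Option (BLit ι P)

def HornBoxClause.sat {ι P W : Type} (M : KModel ι P W) (w : W) (c : HornBoxClause ι P) : Prop :=
  nablaSat M c.nabla w fun v =>
    (∀ l ∈ c.ante, BLit.sat M v l) → c.concl.elim False fun l => BLit.sat M v l

def hornBoxSat {ι P W : Type} (M : KModel ι P W) (w : W) (φ : List (HornBoxClause ι P)) : Prop :=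
  ∀ c ∈ φ, c.sat M w

/-- A Horn-diamond clause: positive literals use diamonds only. -/
structure HornDiaClause (ι P : Type) where
  nabla : List ι
  ante : List (DLit ι P)
  concl : Option (DLit ι P)

def HornDiaClause.sat {ι P W : Type} (M : KModel ι P W) (w : W) (c : HornDiaClause ι P) : Prop :=
  nablaSat M c.nabla w fun v =>
    (∀ l ∈ c.ante, DLit.sat M v l) → c.concl.elim False fun l => DLit.sat M v l

def hornDiaSat {ι P W : Type} (M : KModel ι P W) (w : W) (φ : List (HornDiaClause ι P)) : Prop :=
  ∀ c ∈ φ, c.sat M w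

/-- A signed literal: a positive literal or its negation (`pos = false`). -/
structure SLit (ι P : Type) where
  pos : Bool
  lit : PLit ι P

def SLit.sat {ι P W : Type} (M : KModel ι P W) (w : W) (l : SLit ι P) : Prop :=
  if l.pos then PLit.sat M w l.lit else ¬ PLit.sat M w l.lit

/-- A Krom clause `∇(ℓ₁ ∨ ℓ₂)`; `l2 = none` encodes a unit clause. -/
structure KromClause (ι P : Type) where
  nabla : List ι
  l1 : SLit ι P
  l2 : Option (SLit ι P)

def KromClause.sat {ι P W : Type} (M : KModel ι P W) (w : W) (c : KromClause ι P) : Prop :=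
  nablaSat M c.nabla w fun v =>
    SLit.sat M v c.l1 ∨ c.l2.elim False fun l => SLit.sat M v l

def kromSat {ι P W : Type} (M : KModel ι P W) (w : W) (φ : List (KromClause ι P)) : Prop :=
  ∀ c ∈ φ, c.sat M w

/-- A signed box-literal. -/
structure SBLit (ι P : Type) where
  pos : Bool
  lit : BLit ι P

def SBLit.sat {ι P W : Type} (M : KModel ι P W) (w : W) (l : SBLit ι P) : Prop :=
  if l.pos then BLit.sat M w l.lit else ¬ BLit.sat M w l.lit

/-- A Krom-box clause. -/
structure KromBoxClause (ι P : Type) where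
  nabla : List ι
  l1 : SBLit ι P
  l2 : Option (SBLit ι P)

def KromBoxClause.sat {ι P W : Type} (M : KModel ι P W) (w : W) (c : KromBoxClause ι P) : Prop :=
  nablaSat M c.nabla w fun v =>
    SBLit.sat M v c.l1 ∨ c.l2.elim False fun l => SBLit.sat M v l

def kromBoxSat {ι P W : Type} (M : KModel ι P W) (w : W) (φ : List (KromBoxClause ι P)) : Prop :=
  ∀ c ∈ φ, c.sat M w

/-- A signed diamond-literal. -/
structure SDLit (ι P : Type) where
  pos : Bool
  lit : DLit ι P

def SDLit.sat {ι P W : Type} (M : KModel ι P W) (w : W) (l : SDLit ι P) : Prop :=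
  if l.pos then DLit.sat M w l.lit else ¬ DLit.sat M w l.lit

/-- A Krom-diamond clause. -/
structure KromDiaClause (ι P : Type) where
  nabla : List ι
  l1 : SDLit ι P
  l2 : Option (SDLit ι P)

def KromDiaClause.sat {ι P W : Type} (M : KModel ι P W) (w : W) (c : KromDiaClause ι P) : Prop :=
  nablaSat M c.nabla w fun v =>
    SDLit.sat M v c.l1 ∨ c.l2.elim False fun l => SDLit.sat M v l

def kromDiaSat {ι P W : Type} (M : KModel ι P W) (w : W) (φ : List (KromDiaClause ι P)) : Prop :=
  ∀ c ∈ φ, c.sat M w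

/-- Renaming of propositional letters in a positive literal. -/
def PLit.map {ι P Q : Type} (f : P → Q) : PLit ι P → PLit ι Q
  | .top => .top
  | .atom p => .atom (f p)
  | .dia a l => .dia a (PLit.map f l)
  | .box a l => .box a (PLit.map f l)

def SLit.map {ι P Q : Type} (f : P → Q) (l : SLit ι P) : SLit ι Q :=
  ⟨l.pos, l.lit.map f⟩

def KromClause.map {ι P Q : Type} (f : P → Q) (c : KromClause ι P) : KromClause ι Q :=
  ⟨c.nabla, c.l1.map f, c.l2.map (SLit.map f)⟩

/-- The letter `q` occurs in the positive literal. -/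
def PLit.occurs {ι P : Type} (q : P) : PLit ι P → Prop
  | .top => False
  | .atom r => r = q
  | .dia _ l => PLit.occurs q l
  | .box _ l => PLit.occurs q l

/-- A positive literal containing no propositional letters. -/
def PLit.letterFree {ι P : Type} : PLit ι P → Prop
  | .top => True
  | .atom _ => False
  | .dia _ l => PLit.letterFree l
  | .box _ l => PLit.letterFree l

/-- The letter `q` occurs in the Krom clause. -/
def KromClause.occurs {ι P : Type} (c : KromClause ι P) (q : P) : Prop :=
  PLit.occurs q c.l1.lit ∨ c.l2.elim False fun l => PLit.occurs q l.lit

/-! The fresh letter `p` is read as `¬λ`. Under this reading `∇□_a(p ∨ λ)` holds outright and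
`¬◇_a p` says exactly `□_a λ`, so every model of `φ` extends to a model of `φ'`. Conversely, in any
extension satisfying `∇□_a(p ∨ λ)`, the literal `¬◇_a p` forces `□_a λ` wherever `∇` reaches, so
`∇(¬◇_a p ∨ μ)` yields `∇(□_a λ ∨ μ)`. -/

section Satisfaction

variable {ι P W : Type} (M : KModel ι P W) (w : W)

theorem kromSat_append (φ ψ : List (KromClause ι P)) :
    kromSat M w (φ ++ ψ) ↔ kromSat M w φ ∧ kromSat M w ψ :=
  List.forall_mem_append

theorem kromSat_cons (c : KromClause ι P) (φ : List (KromClause ι P)) :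
    kromSat M w (c :: φ) ↔ c.sat M w ∧ kromSat M w φ :=
  List.forall_mem_cons

theorem kromSat_nil : kromSat M w ([] : List (KromClause ι P)) ↔ True :=
  iff_true_intro (List.forall_mem_nil _)

theorem SLit.sat_mk_true (l : PLit ι P) :
    SLit.sat M w ⟨true, l⟩ ↔ PLit.sat M w l := Iff.rfl

theorem SLit.sat_mk_false (l : PLit ι P) :
    SLit.sat M w ⟨false, l⟩ ↔ ¬ PLit.sat M w l := Iff.rfl

end Satisfaction

section Nabla

variable {ι P W : Type} (M : KModel ι P W)

theorem nablaSat_mono {n : List ι} {Φ Ψ : W → Prop} (h : ∀ v, Φ v → Ψ v) {w : W}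
    (hw : nablaSat M n w Φ) : nablaSat M n w Ψ := by
  induction n generalizing w with
  | nil => exact h w hw
  | cons b rest ih => exact fun v hv => ih (hw v hv)

theorem nablaSat_of_forall {n : List ι} {Φ : W → Prop} (h : ∀ v, Φ v) (w : W) :
    nablaSat M n w Φ := by
  induction n generalizing w with
  | nil => exact h w
  | cons b rest ih => exact fun v _ => ih v

theorem nablaSat_and {n : List ι} {Φ Ψ : W → Prop} {w : W} :
    nablaSat M n w (fun v => Φ v ∧ Ψ v) ↔ nablaSat M n w Φ ∧ nablaSat M n w Ψ := by
  induction n generalizing w with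
  | nil => rfl
  | cons b rest ih =>
    simp only [nablaSat, ih, imp_and, forall_and]

theorem nablaSat_append_singleton (n : List ι) (a : ι) (Φ : W → Prop) (w : W) :
    nablaSat M (n ++ [a]) w Φ ↔ nablaSat M n w (fun v => ∀ u, M.rel a v u → Φ u) := by
  induction n generalizing w with
  | nil => rfl
  | cons b rest ih => exact forall_congr' fun v => imp_congr_right fun _ => ih v

end Nabla

section Extension

variable {ι P Q W : Type} (rel : ι → W → W → Prop)

theorem nablaSat_congr_val (V₁ : W → P → Prop) (V₂ : W → Q → Prop) (n : List ι)
    (Φ : W → Prop) (w : W) : nablaSat ⟨rel, V₁⟩ n w Φ ↔ nablaSat ⟨rel, V₂⟩ n w Φ := by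
  induction n generalizing w with
  | nil => rfl
  | cons b rest ih => exact forall_congr' fun v => imp_congr_right fun _ => ih v

variable {V : W → P → Prop} {V' : W → Q → Prop} {f : P → Q}

theorem PLit.sat_map (hV : ∀ u q, V' u (f q) ↔ V u q) (l : PLit ι P) (w : W) :
    PLit.sat ⟨rel, V'⟩ w (l.map f) ↔ PLit.sat ⟨rel, V⟩ w l := by
  induction l generalizing w with
  | top => exact Iff.rfl
  | atom q => exact hV w q
  | dia b l ih => exact exists_congr fun v => and_congr_right fun _ => ih v
  | box b l ih => exact forall_congr' fun v => imp_congr_right fun _ => ih v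

theorem SLit.sat_map (hV : ∀ u q, V' u (f q) ↔ V u q) (l : SLit ι P) (w : W) :
    SLit.sat ⟨rel, V'⟩ w (l.map f) ↔ SLit.sat ⟨rel, V⟩ w l := by
  obtain ⟨_ | _, lit⟩ := l <;>
    simp [SLit.sat, SLit.map, PLit.sat_map rel hV lit w]

theorem KromClause.sat_map (hV : ∀ u q, V' u (f q) ↔ V u q) (c : KromClause ι P) (w : W) :
    KromClause.sat ⟨rel, V'⟩ w (c.map f) ↔ KromClause.sat ⟨rel, V⟩ w c := by
  obtain ⟨n, l₁, _ | l₂⟩ := c <;>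
    simp only [KromClause.sat, KromClause.map, Option.map, Option.elim, SLit.sat_map rel hV] <;>
    exact nablaSat_congr_val rel V' V n _ w

theorem kromSat_map (hV : ∀ u q, V' u (f q) ↔ V u q) (φ : List (KromClause ι P)) (w : W) :
    kromSat ⟨rel, V'⟩ w (φ.map (KromClause.map f)) ↔ kromSat ⟨rel, V⟩ w φ := by
  simp only [kromSat, List.forall_mem_map, KromClause.sat_map rel hV]

end Extension

section BoxElimination

variable {ι P W : Type} {rel : ι → W → W → Prop} {V : W → P → Prop} {V' : W → Option P → Prop}
  (a : ι) (nab : List ι) (lam : PLit ι P) (mu : SLit ι P)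

theorem sat_negDiaFresh_of_sat_box (hV : ∀ u q, V' u (some q) ↔ V u q)
    (hp : ∀ u, V' u none → ¬ PLit.sat ⟨rel, V⟩ u lam) {w : W}
    (h : KromClause.sat ⟨rel, V⟩ w ⟨nab, ⟨true, .box a lam⟩, some mu⟩) :
    KromClause.sat ⟨rel, V'⟩ w ⟨nab, ⟨false, .dia a (.atom none)⟩, some (mu.map some)⟩ := by
  unfold KromClause.sat at h ⊢
  rw [nablaSat_congr_val rel V' V]
  refine nablaSat_mono _ (fun v hv => ?_) h
  simp only [Option.elim, SLit.sat_mk_true, SLit.sat_mk_false, PLit.sat,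
    SLit.sat_map rel hV] at hv ⊢
  rcases hv with hbox | hmu
  · exact Or.inl fun ⟨u, hvu, hpu⟩ => hp u hpu (hbox u hvu)
  · exact Or.inr hmu

theorem sat_boxFreshOrLit (hV : ∀ u q, V' u (some q) ↔ V u q)
    (hp : ∀ u, ¬ PLit.sat ⟨rel, V⟩ u lam → V' u none) (w : W) :
    KromClause.sat ⟨rel, V'⟩ w ⟨nab ++ [a], ⟨true, .atom none⟩, some ⟨true, lam.map some⟩⟩ := by
  refine nablaSat_of_forall _ (fun u => ?_) w
  simp only [Option.elim, SLit.sat_mk_true, PLit.sat, PLit.sat_map rel hV]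
  exact or_iff_not_imp_right.2 (hp u)

theorem sat_box_of_sat_negDiaFresh (hV : ∀ u q, V' u (some q) ↔ V u q) {w : W}
    (h₁ : KromClause.sat ⟨rel, V'⟩ w ⟨nab, ⟨false, .dia a (.atom none)⟩, some (mu.map some)⟩)
    (h₂ : KromClause.sat ⟨rel, V'⟩ w ⟨nab ++ [a], ⟨true, .atom none⟩, some ⟨true, lam.map some⟩⟩) :
    KromClause.sat ⟨rel, V⟩ w ⟨nab, ⟨true, .box a lam⟩, some mu⟩ := by
  unfold KromClause.sat at h₁ h₂ ⊢
  rw [nablaSat_append_singleton] at h₂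
  rw [nablaSat_congr_val rel V V']
  refine nablaSat_mono _ (fun v ⟨hv₁, hv₂⟩ => ?_) ((nablaSat_and _).2 ⟨h₁, h₂⟩)
  simp only [Option.elim, SLit.sat_mk_true, SLit.sat_mk_false, PLit.sat,
    SLit.sat_map rel hV, PLit.sat_map rel hV] at hv₁ hv₂ ⊢
  rcases hv₁ with hnodia | hmu
  · exact Or.inl fun u hvu => (hv₂ u hvu).resolve_left fun hpu => hnodia ⟨u, hvu, hpu⟩
  · exact Or.inr hmu

end BoxElimination

/-- The alphabet `P` is extended to `Option P`, the fresh letter being `none`. -/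
theorem krom_box_elimination {ι P : Type} (a : ι) (nab : List ι)
    (lam : PLit ι P) (mu : SLit ι P) (φ₀ : List (KromClause ι P)) :
    ∀ (W : Type) (rel : ι → W → W → Prop) (V : W → P → Prop) (w : W),
      kromSat ⟨rel, V⟩ w (φ₀ ++ [⟨nab, ⟨true, .box a lam⟩, some mu⟩]) ↔
      ∃ V' : W → Option P → Prop,
        (∀ u q, V' u (some q) ↔ V u q) ∧
        kromSat ⟨rel, V'⟩ w
          (φ₀.map (KromClause.map some) ++
            [⟨nab, ⟨false, .dia a (.atom none)⟩, some (mu.map some)⟩,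
             ⟨nab ++ [a], ⟨true, .atom none⟩, some ⟨true, lam.map some⟩⟩]) := by
  intro W rel V w
  simp only [kromSat_append, kromSat_cons, kromSat_nil, and_true]
  constructor
  · rintro ⟨h₀, h⟩
    let V' : W → Option P → Prop := fun u o => o.elim (¬ PLit.sat ⟨rel, V⟩ u lam) (V u)
    have hV : ∀ u q, V' u (some q) ↔ V u q := fun _ _ => Iff.rfl
    exact ⟨V', hV, (kromSat_map rel hV φ₀ w).2 h₀,
      sat_negDiaFresh_of_sat_box a nab lam mu hV (fun _ => id) h,
      sat_boxFreshOrLit a nab lam hV (fun _ => id) w⟩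
  · rintro ⟨V', hV, h₀, h₁, h₂⟩
    exact ⟨(kromSat_map rel hV φ₀ w).1 h₀, sat_box_of_sat_negDiaFresh a nab lam mu hV h₁ h₂⟩
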